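/- Let X, Y₁, Y₂ be finitely-valued random variables and let Ŷ₁, Ŷ₂ be independent erasure versions of Y₁, Y₂ with retention probabilities q₁, q₂ ∈ [0,1] respectively (Ŷᵢ = Yᵢ with probability qᵢ, else a fresh erasure symbol; the two erasure indicators are independent of everything and of each other). Then for any random variable Z, I(X; Ŷ₁, Ŷ₂ | Z) = q₁(1−q₂)·I(X; Y₁ | Z) + (1−q₁)q₂·I(X; Y₂ | Z) + q₁q₂·I(X; Y₁, Y₂ | Z). -/

import Mathlib

/-! Conditioning on an erasure variable `Ŷ = (if b then some Y else none)` reveals the coin `b`,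
so the conditional entropy splits along it: `H(X | Z, Ŷ) = (1 - q) H(X | Z) + q H(X | Z, Y)`.
Erasing `Ŷ₂` and then `Ŷ₁` this way expands `H(X | Z, Ŷ₁, Ŷ₂)` over the four erasure patterns,
while `H(X | Z)` does not see the coins at all; subtracting gives the identity. -/

open Finset Real

/-- Probability that the random variable `X` takes the value `x`, for a finite
probability space with mass function `p`. -/
noncomputable def pr {Ω α : Type*} [Fintype Ω] [DecidableEq α]
    (p : Ω → ℝ) (X : Ω → α) (x : α) : ℝ :=
  ∑ ω, if X ω = x then p ω else 0

/-- Conditional Shannon entropy (base 2) `H(X | Z)` on a finite probability space. -/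
noncomputable def condEntropy {Ω α β : Type*} [Fintype Ω] [Fintype α] [Fintype β]
    [DecidableEq α] [DecidableEq β] (p : Ω → ℝ) (X : Ω → α) (Z : Ω → β) : ℝ :=
  -∑ x : α, ∑ z : β,
      pr p (fun ω => (X ω, Z ω)) (x, z) *
        Real.logb 2 (pr p (fun ω => (X ω, Z ω)) (x, z) / pr p Z z)

/-- Conditional mutual information `I(X ; Y | Z) = H(X|Z) - H(X|Z,Y)`. -/
noncomputable def condMI {Ω α β γ : Type*} [Fintype Ω] [Fintype α] [Fintype β] [Fintype γ]
    [DecidableEq α] [DecidableEq β] [DecidableEq γ]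
    (p : Ω → ℝ) (X : Ω → α) (Y : Ω → β) (Z : Ω → γ) : ℝ :=
  condEntropy p X Z - condEntropy p X (fun ω => (Z ω, Y ω))

section
variable {Ω Ω' ι α β γ : Type*} [Fintype Ω] [Fintype Ω'] [Fintype ι]

theorem pr_congr_of_iff [DecidableEq α] [DecidableEq β] (p : Ω → ℝ) {V : Ω → α} {W : Ω → β}
    {v : α} {w : β} (h : ∀ ω, V ω = v ↔ W ω = w) : pr p V v = pr p W w := by
  simp only [pr, h]

theorem pr_comp_equiv [DecidableEq α] (e : Ω' ≃ Ω) (p : Ω → ℝ) (V : Ω → α) (v : α) :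
    pr (p ∘ e) (V ∘ e) v = pr p V v :=
  e.sum_comp fun ω => if V ω = v then p ω else 0

theorem pr_prod_mul [DecidableEq α] (p : Ω → ℝ) (r : ι → ℝ) (V : Ω × ι → α) (v : α) :
    pr (fun e : Ω × ι => p e.1 * r e.2) V v = ∑ b, r b * pr p (fun ω => V (ω, b)) v := by
  simp only [pr, Fintype.sum_prod_type, Finset.mul_sum, mul_ite, mul_zero]
  rw [Finset.sum_comm]
  simp only [mul_comm]

theorem pr_comp_fst [DecidableEq α] (p : Ω → ℝ) {r : ι → ℝ} (hr : ∑ b, r b = 1)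
    (V : Ω → α) (v : α) : pr (fun e : Ω × ι => p e.1 * r e.2) (fun e => V e.1) v = pr p V v := by
  rw [pr_prod_mul]
  simp only [← Finset.sum_mul, hr, one_mul]

theorem pr_prod_bool [DecidableEq α] (p : Ω → ℝ) (q : ℝ) (V : Ω × Bool → α) (v : α) :
    pr (fun e : Ω × Bool => p e.1 * (if e.2 then q else 1 - q)) V v
      = q * pr p (fun ω => V (ω, true)) v + (1 - q) * pr p (fun ω => V (ω, false)) v :=
  (pr_prod_mul p (fun b => if b then q else 1 - q) V v).trans (Fintype.sum_bool _)

variable [Fintype α] [Fintype β] [Fintype γ] [DecidableEq α] [DecidableEq β] [DecidableEq γ]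

theorem condEntropy_congr {p : Ω → ℝ} {p' : Ω' → ℝ} {X : Ω → α} {X' : Ω' → α} {Z : Ω → β}
    {Z' : Ω' → β}
    (hXZ : ∀ x z, pr p (fun ω => (X ω, Z ω)) (x, z) = pr p' (fun ω => (X' ω, Z' ω)) (x, z))
    (hZ : ∀ z, pr p Z z = pr p' Z' z) : condEntropy p X Z = condEntropy p' X' Z' := by
  simp only [condEntropy, hXZ, hZ]

theorem condEntropy_comp_equiv (e : Ω' ≃ Ω) (p : Ω → ℝ) (X : Ω → α) (Z : Ω → β) :
    condEntropy (p ∘ e) (X ∘ e) (Z ∘ e) = condEntropy p X Z :=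
  condEntropy_congr (fun x z => pr_comp_equiv e p (fun ω => (X ω, Z ω)) (x, z))
    (pr_comp_equiv e p Z)

theorem condEntropy_comp_fst (p : Ω → ℝ) {r : ι → ℝ} (hr : ∑ b, r b = 1) (X : Ω → α)
    (Z : Ω → β) :
    condEntropy (fun e : Ω × ι => p e.1 * r e.2) (fun e => X e.1) (fun e => Z e.1)
      = condEntropy p X Z :=
  condEntropy_congr (fun x z => pr_comp_fst p hr (fun ω => (X ω, Z ω)) (x, z))
    (pr_comp_fst p hr Z)

theorem condEntropy_eq_of_equiv (p : Ω → ℝ) (X : Ω → α) {Z : Ω → β} {Z' : Ω → γ} (g : β ≃ γ)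
    (hZ' : ∀ ω, Z' ω = g (Z ω)) : condEntropy p X Z' = condEntropy p X Z := by
  obtain rfl : Z' = fun ω => g (Z ω) := funext hZ'
  simp only [condEntropy]
  congr 1
  refine Finset.sum_congr rfl fun x _ => ?_
  rw [← g.sum_comp]
  refine Finset.sum_congr rfl fun z _ => ?_
  have hXZ : pr p (fun ω => (X ω, g (Z ω))) (x, g z) = pr p (fun ω => (X ω, Z ω)) (x, z) :=
    pr_congr_of_iff p fun ω => by simp
  have hZ : pr p (fun ω => g (Z ω)) (g z) = pr p Z z :=
    pr_congr_of_iff p fun ω => g.apply_eq_iff_eq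
  rw [hXZ, hZ]

theorem mul_mul_logb_div_mul_left (c a b : ℝ) :
    c * a * logb 2 (c * a / (c * b)) = c * (a * logb 2 (a / b)) := by
  rcases eq_or_ne c 0 with rfl | hc
  · simp
  · rw [mul_div_mul_left _ _ hc, mul_assoc]

theorem condEntropy_erasure (p : Ω → ℝ) (q : ℝ) (X : Ω → α) (Y : Ω → β) (Z : Ω → γ) :
    condEntropy (fun e : Ω × Bool => p e.1 * (if e.2 then q else 1 - q)) (fun e => X e.1)
        (fun e => (Z e.1, if e.2 then some (Y e.1) else none))
      = (1 - q) * condEntropy p X Z + q * condEntropy p X (fun ω => (Z ω, Y ω)) := by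
  set P := fun e : Ω × Bool => p e.1 * (if e.2 then q else 1 - q) with hP
  set Ŷ := fun e : Ω × Bool => if e.2 then some (Y e.1) else none with hŶ
  change condEntropy P (fun e => X e.1) (fun e => (Z e.1, Ŷ e)) = _
  have hZ_none : ∀ z, pr P (fun e => (Z e.1, Ŷ e)) (z, none) = (1 - q) * pr p Z z := fun z => by
    rw [hP, pr_prod_bool]
    simp [pr, hŶ]
  have hZ_some : ∀ z y, pr P (fun e => (Z e.1, Ŷ e)) (z, some y)
      = q * pr p (fun ω => (Z ω, Y ω)) (z, y) := fun z y => by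
    rw [hP, pr_prod_bool]
    simp [pr, hŶ]
  have hXZ_none : ∀ x z, pr P (fun e => (X e.1, Z e.1, Ŷ e)) (x, z, none)
      = (1 - q) * pr p (fun ω => (X ω, Z ω)) (x, z) := fun x z => by
    rw [hP, pr_prod_bool]
    simp [pr, hŶ]
  have hXZ_some : ∀ x z y, pr P (fun e => (X e.1, Z e.1, Ŷ e)) (x, z, some y)
      = q * pr p (fun ω => (X ω, Z ω, Y ω)) (x, z, y) := fun x z y => by
    rw [hP, pr_prod_bool]
    simp [pr, hŶ]
  simp only [condEntropy, Fintype.sum_prod_type, Fintype.sum_option, hZ_none, hZ_some, hXZ_none,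
    hXZ_some, mul_mul_logb_div_mul_left, Finset.sum_add_distrib, ← Finset.mul_sum]
  ring

theorem condEntropy_two_erasures {β₁ β₂ : Type*} [Fintype β₁] [Fintype β₂] [DecidableEq β₁]
    [DecidableEq β₂] (p : Ω → ℝ) (q₁ q₂ : ℝ) (X : Ω → α) (Y₁ : Ω → β₁) (Y₂ : Ω → β₂)
    (Z : Ω → γ) :
    condEntropy (fun e : Ω × Bool × Bool =>
        p e.1 * (if e.2.1 then q₁ else 1 - q₁) * (if e.2.2 then q₂ else 1 - q₂))
        (fun e => X e.1)
        (fun e => (Z e.1, (if e.2.1 then some (Y₁ e.1) else none),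
                   (if e.2.2 then some (Y₂ e.1) else none)))
      = (1 - q₁) * (1 - q₂) * condEntropy p X Z
        + q₁ * (1 - q₂) * condEntropy p X (fun ω => (Z ω, Y₁ ω))
        + (1 - q₁) * q₂ * condEntropy p X (fun ω => (Z ω, Y₂ ω))
        + q₁ * q₂ * condEntropy p X (fun ω => (Z ω, Y₁ ω, Y₂ ω)) := by
  let P₁ := fun e : Ω × Bool => p e.1 * (if e.2 then q₁ else 1 - q₁)
  let Ŷ₁ := fun e : Ω × Bool => if e.2 then some (Y₁ e.1) else none
  have hswap : condEntropy P₁ (fun e => X e.1) (fun e => ((Z e.1, Ŷ₁ e), Y₂ e.1))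
      = condEntropy P₁ (fun e => X e.1) (fun e => ((Z e.1, Y₂ e.1), Ŷ₁ e)) :=
    condEntropy_eq_of_equiv _ _ ((Equiv.prodAssoc _ _ _).trans
      (((Equiv.refl γ).prodCongr (Equiv.prodComm _ _)).trans (Equiv.prodAssoc _ _ _).symm))
      fun _ => rfl
  have hassoc : condEntropy p X (fun ω => (Z ω, Y₁ ω, Y₂ ω))
      = condEntropy p X (fun ω => ((Z ω, Y₂ ω), Y₁ ω)) :=
    condEntropy_eq_of_equiv _ _ ((Equiv.prodAssoc _ _ _).trans
      ((Equiv.refl γ).prodCongr (Equiv.prodComm _ _))) fun _ => rfl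
  -- regroup `Ω × Bool × Bool` as `(Ω × Bool) × Bool`, so that `Ŷ₂` is erased by the outer coin
  calc _ = condEntropy (fun e : (Ω × Bool) × Bool => P₁ e.1 * (if e.2 then q₂ else 1 - q₂))
          (fun e => X e.1.1)
          (fun e => ((Z e.1.1, Ŷ₁ e.1), if e.2 then some (Y₂ e.1.1) else none)) := by
        rw [← condEntropy_comp_equiv (Equiv.prodAssoc Ω Bool Bool)]
        simp only [Function.comp_def, Equiv.prodAssoc_apply]
        exact condEntropy_eq_of_equiv _ _ (Equiv.prodAssoc γ (Option β₁) (Option β₂))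
          fun _ => rfl
    _ = (1 - q₂) * condEntropy P₁ (fun e => X e.1) (fun e => (Z e.1, Ŷ₁ e))
        + q₂ * condEntropy P₁ (fun e => X e.1) (fun e => ((Z e.1, Ŷ₁ e), Y₂ e.1)) :=
      condEntropy_erasure P₁ q₂ (fun e => X e.1) (fun e => Y₂ e.1) (fun e => (Z e.1, Ŷ₁ e))
    _ = _ := by
      rw [hswap, condEntropy_erasure, condEntropy_erasure p q₁ X Y₁ (fun ω => (Z ω, Y₂ ω)),
        hassoc]
      ring

end

theorem two_relay_erasure_condMI_general
    {Ω 𝒳 𝒴₁ 𝒴₂ 𝒵 : Type*} [Fintype Ω] [Fintype 𝒳] [Fintype 𝒴₁] [Fintype 𝒴₂] [Fintype 𝒵]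
    [DecidableEq 𝒳] [DecidableEq 𝒴₁] [DecidableEq 𝒴₂] [DecidableEq 𝒵]
    (p : Ω → ℝ) (q₁ q₂ : ℝ)
    (X : Ω → 𝒳) (Y₁ : Ω → 𝒴₁) (Y₂ : Ω → 𝒴₂) (Z : Ω → 𝒵) :
    condMI (fun e : Ω × Bool × Bool =>
        p e.1 * (if e.2.1 then q₁ else 1 - q₁) * (if e.2.2 then q₂ else 1 - q₂))
        (fun e => X e.1)
        (fun e => ((if e.2.1 then some (Y₁ e.1) else none),
                   (if e.2.2 then some (Y₂ e.1) else none)))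
        (fun e => Z e.1)
      = q₁ * (1 - q₂) * condMI p X Y₁ Z + (1 - q₁) * q₂ * condMI p X Y₂ Z
          + q₁ * q₂ * condMI p X (fun ω => (Y₁ ω, Y₂ ω)) Z := by
  have hcoins : ∑ b : Bool × Bool,
      (if b.1 then q₁ else 1 - q₁) * (if b.2 then q₂ else 1 - q₂) = 1 := by
    simp only [Fintype.sum_prod_type, Fintype.sum_bool, Bool.false_eq_true, ↓reduceIte]
    ring
  have hlift := condEntropy_comp_fst p hcoins X Z
  simp only [← mul_assoc] at hlift
  rw [condMI, hlift, condEntropy_two_erasures]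
  simp only [condMI]
  ring

/-- If `Ŷ₁, Ŷ₂` are independent erasure versions of `Y₁, Y₂` with retention
probabilities `q₁, q₂` (erasure indicators independent of everything and of each other), then
`I(X; Ŷ₁, Ŷ₂ | Z) = q₁(1−q₂)·I(X;Y₁|Z) + (1−q₁)q₂·I(X;Y₂|Z) + q₁q₂·I(X;Y₁,Y₂|Z)`. -/
theorem two_relay_erasure_condMI
    {Ω 𝒳 𝒴₁ 𝒴₂ 𝒵 : Type*} [Fintype Ω] [Fintype 𝒳] [Fintype 𝒴₁] [Fintype 𝒴₂] [Fintype 𝒵]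
    [DecidableEq 𝒳] [DecidableEq 𝒴₁] [DecidableEq 𝒴₂] [DecidableEq 𝒵]
    (p : Ω → ℝ) (hp : ∀ ω, 0 ≤ p ω) (hp1 : ∑ ω, p ω = 1)
    (q₁ q₂ : ℝ) (hq₁0 : 0 ≤ q₁) (hq₁1 : q₁ ≤ 1) (hq₂0 : 0 ≤ q₂) (hq₂1 : q₂ ≤ 1)
    (X : Ω → 𝒳) (Y₁ : Ω → 𝒴₁) (Y₂ : Ω → 𝒴₂) (Z : Ω → 𝒵) :
    condMI (fun e : Ω × Bool × Bool =>
        p e.1 * (if e.2.1 then q₁ else 1 - q₁) * (if e.2.2 then q₂ else 1 - q₂))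
        (fun e => X e.1)
        (fun e => ((if e.2.1 then some (Y₁ e.1) else none),
                   (if e.2.2 then some (Y₂ e.1) else none)))
        (fun e => Z e.1)
      = q₁ * (1 - q₂) * condMI p X Y₁ Z + (1 - q₁) * q₂ * condMI p X Y₂ Z
          + q₁ * q₂ * condMI p X (fun ω => (Y₁ ω, Y₂ ω)) Z :=
  two_relay_erasure_condMI_general p q₁ q₂ X Y₁ Y₂ Z
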